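/- arXiv:1908.11725 — 5 statements merged into one kernel-verified Lean document; each statement's English description precedes it below -/
import Mathlib

section
/- Let n ≥ 1, let Q : ℝ → Mₙ(ℂ) be four times continuously differentiable, and let x : ℝ → ℂⁿ be differentiable with x'(u) = Q(u)·x(u) for all u ∈ ℝ. Fix t ∈ ℝ and s ∈ ℝ, and define the one-step transition matrix T(τ) = I + τ·Q(t) + τ²·T₂ + τ³·T₃ + τ⁴·T₄, where T₂, T₃, T₄ are built from Q and its derivatives at t as in the context. Then the scheme is consistent of fourth order: x(t + s·τ) − T(τ)·x(t + (s−1)·τ) = O(τ⁵) as τ → 0. -/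
/-!
Differentiating `x' = Q x` repeatedly gives `x⁽ᵏ⁾ = Qₖ x` with `Qₖ₊₁ = Qₖ' + Qₖ Q`; at `t` these
are the matrices `Q₂, Q₃, Q₄` of the statement. Taylor's theorem then gives
`x (t + h) = S h · x t + O(h⁵)` with `S h = ∑_{k ≤ 4} hᵏ/k! · Qₖ`, so the local error is
`(S (sτ) - T τ · S ((s-1)τ)) · x t + O(τ⁵)`. The coefficients `T₂, T₃, T₄` are exactly those for
which this matrix polynomial has no terms of degree below five, which is a computation in the
noncommutative algebra generated by `Q₁, …, Q₄`.
-/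

open Matrix Filter Asymptotics Finset
open scoped Topology Nat

attribute [local instance] Matrix.normedAddCommGroup Matrix.normedSpace

section TaylorChain

variable {E : Type*} [NormedAddCommGroup E] [NormedSpace ℝ E]

theorem isBigO_pow_succ_of_hasDerivAt {f f' : ℝ → E} {k : ℕ}
    (hf : ∀ᶠ u in 𝓝 0, HasDerivAt f (f' u) u) (h0 : f 0 = 0)
    (hf' : f' =O[𝓝 0] fun τ => τ ^ k) :
    f =O[𝓝 0] fun τ => τ ^ (k + 1) := by
  obtain ⟨C, hC, hC'⟩ := hf'.exists_pos
  obtain ⟨δ, hδ, hball⟩ := Metric.eventually_nhds_iff_ball.mp (hf.and hC'.bound)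
  refine IsBigO.of_bound C (Metric.eventually_nhds_iff_ball.mpr ⟨δ, hδ, fun τ hτ => ?_⟩)
  have hsub : Metric.closedBall (0 : ℝ) ‖τ‖ ⊆ Metric.ball 0 δ :=
    Metric.closedBall_subset_ball (by simpa using hτ)
  have hbound : ∀ u ∈ Metric.closedBall (0 : ℝ) ‖τ‖, ‖f' u‖ ≤ C * ‖τ‖ ^ k := fun u hu => by
    refine (hball u (hsub hu)).2.trans ?_
    rw [norm_pow]
    gcongr
    simpa using hu
  have := (convex_closedBall (0 : ℝ) ‖τ‖).norm_image_sub_le_of_norm_hasDerivWithin_le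
    (fun u hu => (hball u (hsub hu)).1.hasDerivWithinAt) hbound
    (Metric.mem_closedBall_self (norm_nonneg τ)) (y := τ) (by simp)
  simpa [h0, norm_pow, pow_succ, mul_assoc] using this

theorem hasDerivAt_sum_pow_div_factorial_smul (c : ℕ → E) (m : ℕ) (h : ℝ) :
    HasDerivAt (fun h : ℝ => ∑ k ∈ range (m + 1), (h ^ k / k !) • c k)
      (∑ k ∈ range m, (h ^ k / k !) • c (k + 1)) h := by
  induction m with
  | zero => simpa using hasDerivAt_const h (c 0)
  | succ m ih =>
    have hterm : HasDerivAt (fun h : ℝ => (h ^ (m + 1) / (m + 1)!) • c (m + 1))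
        ((h ^ m / m !) • c (m + 1)) h := by
      convert ((hasDerivAt_pow (m + 1) h).div_const ((m + 1)! : ℝ)).smul_const (c (m + 1)) using 2
      push_cast [Nat.factorial_succ]
      field_simp
    convert ih.fun_add hterm using 1
    · ext h
      rw [sum_range_succ]
    · rw [sum_range_succ]

theorem isBigO_sub_sum_pow_div_factorial_smul {f : ℕ → ℝ → E} {x₀ : ℝ} {m : ℕ}
    (hf : ∀ k < m, ∀ u, HasDerivAt (f k) (f (k + 1) u) u) (hm : DifferentiableAt ℝ (f m) x₀) :
    (fun h => f 0 (x₀ + h) - ∑ k ∈ range (m + 1), (h ^ k / k !) • f k x₀)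
      =O[𝓝 0] fun h => h ^ (m + 1) := by
  induction m generalizing f with
  | zero =>
    have hx₀ : Tendsto (x₀ + ·) (𝓝 0) (𝓝 x₀) := by
      simpa using (continuous_const_add x₀).tendsto 0
    simpa [Function.comp_def] using hm.hasDerivAt.hasFDerivAt.isBigO_sub.comp_tendsto hx₀
  | succ m ih =>
    refine isBigO_pow_succ_of_hasDerivAt (Eventually.of_forall fun h => ?_)
      (by simp [sum_range_succ'])
      (ih (f := fun k => f (k + 1)) (fun k hk => hf (k + 1) (by omega)) hm)
    exact (((hf 0 (by omega) (x₀ + h)).comp_const_add x₀ h)).sub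
      (hasDerivAt_sum_pow_div_factorial_smul (fun k => f k x₀) (m + 1) h)

end TaylorChain

theorem Asymptotics.IsBigO.comp_const_mul {E : Type*} [Norm E] {g : ℝ → E} {m : ℕ}
    (hg : g =O[𝓝 0] fun h => h ^ m) (c : ℝ) : (fun τ => g (c * τ)) =O[𝓝 0] fun τ => τ ^ m := by
  have hc : Tendsto (c * ·) (𝓝 0) (𝓝 0) := by simpa using (continuous_const_mul c).tendsto 0
  refine (hg.comp_tendsto hc).trans ?_
  simpa [Function.comp_def, mul_pow] using isBigO_const_mul_self (c ^ m) (fun τ : ℝ => τ ^ m) (𝓝 0)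

theorem ContDiff.hasDerivAt_iteratedDeriv {𝕜 F : Type*} [NontriviallyNormedField 𝕜]
    [NormedAddCommGroup F] [NormedSpace 𝕜 F] {f : 𝕜 → F} {n : WithTop ℕ∞} {m : ℕ}
    (hf : ContDiff 𝕜 n f) (hm : m < n) (x : 𝕜) :
    HasDerivAt (iteratedDeriv m f) (iteratedDeriv (m + 1) f x) x := by
  rw [iteratedDeriv_succ]
  exact (hf.differentiable_iteratedDeriv m hm x).hasDerivAt

section MatrixCalculus

variable {ι 𝔸 : Type*} [Fintype ι] [NormedRing 𝔸]

theorem Asymptotics.IsBigO.matrix_mulVec {α : Type*} {l : Filter α} {A : α → Matrix ι ι 𝔸}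
    {v : α → ι → 𝔸} {g : α → ℝ} (hA : A =O[l] fun _ => (1 : ℝ)) (hv : v =O[l] g) :
    (fun a => A a *ᵥ v a) =O[l] g := by
  refine isBigO_pi.2 fun i => ?_
  simp only [Matrix.mulVec, dotProduct]
  refine IsBigO.fun_sum fun j _ => ?_
  have hprod := (isBigO_pi.1 (isBigO_pi.1 hA i) j).norm_left.mul (isBigO_pi.1 hv j).norm_left
  refine (isBigO_of_le l fun a => ?_).trans (hprod.congr_right fun a => one_mul _)
  simpa [abs_mul] using norm_mul_le (A a i j) (v a j)

variable [NormedAlgebra ℝ 𝔸]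

theorem hasDerivAt_matrix_iff {A : ℝ → Matrix ι ι 𝔸} {A' : Matrix ι ι 𝔸} {u : ℝ} :
    HasDerivAt A A' u ↔ ∀ i j, HasDerivAt (fun v => A v i j) (A' i j) u :=
  hasDerivAt_pi.trans <| forall_congr' fun _ => hasDerivAt_pi

theorem HasDerivAt.matrix_mul {A B : ℝ → Matrix ι ι 𝔸} {A' B' : Matrix ι ι 𝔸} {u : ℝ}
    (hA : HasDerivAt A A' u) (hB : HasDerivAt B B' u) :
    HasDerivAt (fun v => A v * B v) (A' * B u + A u * B') u := by
  rw [hasDerivAt_matrix_iff] at *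
  intro i j
  simp only [Matrix.add_apply, Matrix.mul_apply, ← Finset.sum_add_distrib]
  exact HasDerivAt.fun_sum fun k _ => (hA i k).mul (hB k j)

theorem HasDerivAt.matrix_mulVec {A : ℝ → Matrix ι ι 𝔸} {y : ℝ → ι → 𝔸} {A' : Matrix ι ι 𝔸}
    {y' : ι → 𝔸} {u : ℝ} (hA : HasDerivAt A A' u) (hy : HasDerivAt y y' u) :
    HasDerivAt (fun v => A v *ᵥ y v) (A' *ᵥ y u + A u *ᵥ y') u := by
  rw [hasDerivAt_matrix_iff] at hA
  rw [hasDerivAt_pi] at *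
  intro i
  simp only [Pi.add_apply, Matrix.mulVec, dotProduct, ← Finset.sum_add_distrib]
  exact HasDerivAt.fun_sum fun k _ => (hA i k).mul (hy k)

@[fun_prop]
theorem DifferentiableAt.matrix_mul {A B : ℝ → Matrix ι ι 𝔸} {u : ℝ}
    (hA : DifferentiableAt ℝ A u) (hB : DifferentiableAt ℝ B u) :
    DifferentiableAt ℝ (fun v => A v * B v) u :=
  (hA.hasDerivAt.matrix_mul hB.hasDerivAt).differentiableAt

end MatrixCalculus

/-- The matrix `Qₖ` with `x⁽ᵏ⁾ = Qₖ x` for solutions of `x' = Q x`, written in terms of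
`q = Q` and `qⱼ = Q⁽ʲ⁾`. Only `k ≤ 4` is meaningful: all larger `k` give `Q₄`. -/
def odeDerivMatrix {R : Type*} [Ring R] (q q₁ q₂ q₃ : R) : ℕ → R
  | 0 => 1
  | 1 => q
  | 2 => q₁ + q ^ 2
  | 3 => q₂ + 2 • (q₁ * q) + q * q₁ + q ^ 3
  | _ => q₃ + 3 • (q₂ * q) + q * q₂ + 3 • q₁ ^ 2 + 3 • (q₁ * q ^ 2) + 2 • (q * q₁ * q)
      + q ^ 2 * q₁ + q ^ 4

section OdeTaylor

variable {ι 𝔸 : Type*} [Fintype ι] [DecidableEq ι] [NormedRing 𝔸] [NormedAlgebra ℝ 𝔸]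

theorem hasDerivAt_odeDerivMatrix {Q Q₁ Q₂ Q₃ : ℝ → Matrix ι ι 𝔸} {u : ℝ}
    (h₀ : HasDerivAt Q (Q₁ u) u) (h₁ : HasDerivAt Q₁ (Q₂ u) u) (h₂ : HasDerivAt Q₂ (Q₃ u) u)
    {k : ℕ} (hk : k < 4) :
    HasDerivAt (fun v => odeDerivMatrix (Q v) (Q₁ v) (Q₂ v) (Q₃ v) k)
      (odeDerivMatrix (Q u) (Q₁ u) (Q₂ u) (Q₃ u) (k + 1)
        - odeDerivMatrix (Q u) (Q₁ u) (Q₂ u) (Q₃ u) k * Q u) u := by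
  have h₀₀ := h₀.matrix_mul h₀
  interval_cases k <;> simp only [odeDerivMatrix, pow_succ, pow_zero, one_mul]
  · exact (hasDerivAt_const u _).congr_deriv (by simp)
  · exact h₀.congr_deriv (by noncomm_ring)
  · exact (h₁.add h₀₀).congr_deriv (by noncomm_ring)
  · exact ((((h₂.add ((h₁.matrix_mul h₀).const_smul 2)).add (h₀.matrix_mul h₁)).add
      (h₀₀.matrix_mul h₀))).congr_deriv (by noncomm_ring)

theorem differentiableAt_odeDerivMatrix {Q Q₁ Q₂ Q₃ : ℝ → Matrix ι ι 𝔸} {u : ℝ}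
    (h₀ : DifferentiableAt ℝ Q u) (h₁ : DifferentiableAt ℝ Q₁ u) (h₂ : DifferentiableAt ℝ Q₂ u)
    (h₃ : DifferentiableAt ℝ Q₃ u) (k : ℕ) :
    DifferentiableAt ℝ (fun v => odeDerivMatrix (Q v) (Q₁ v) (Q₂ v) (Q₃ v) k) u := by
  match k with
  | 0 | 1 | 2 | 3 | _ + 4 => simp only [odeDerivMatrix, pow_succ, pow_zero, one_mul]; fun_prop

variable {Q : ℝ → Matrix ι ι 𝔸} {x : ℝ → ι → 𝔸}

theorem hasDerivAt_odeDerivMatrix_mulVec (hQ : ContDiff ℝ 3 Q)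
    (hx : ∀ u, HasDerivAt x (Q u *ᵥ x u) u) {k : ℕ} (hk : k < 4) (u : ℝ) :
    HasDerivAt
      (fun v => odeDerivMatrix (Q v) (iteratedDeriv 1 Q v) (iteratedDeriv 2 Q v)
        (iteratedDeriv 3 Q v) k *ᵥ x v)
      (odeDerivMatrix (Q u) (iteratedDeriv 1 Q u) (iteratedDeriv 2 Q u)
        (iteratedDeriv 3 Q u) (k + 1) *ᵥ x u) u := by
  have hD : ∀ j < 3, HasDerivAt (iteratedDeriv j Q) (iteratedDeriv (j + 1) Q u) u :=
    fun j hj => hQ.hasDerivAt_iteratedDeriv (by exact_mod_cast hj) u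
  have hA := hasDerivAt_odeDerivMatrix (by simpa using hD 0 (by norm_num)) (hD 1 (by norm_num))
    (hD 2 (by norm_num)) hk
  exact (hA.matrix_mulVec (hx u)).congr_deriv (by rw [mulVec_mulVec, ← add_mulVec, sub_add_cancel])

theorem isBigO_sub_taylor_of_hasDerivAt_mulVec (hQ : ContDiff ℝ 4 Q)
    (hx : ∀ u, HasDerivAt x (Q u *ᵥ x u) u) (t : ℝ) :
    (fun h => x (t + h) - (∑ k ∈ range 5, (h ^ k / k !) • odeDerivMatrix (Q t)
        (iteratedDeriv 1 Q t) (iteratedDeriv 2 Q t) (iteratedDeriv 3 Q t) k) *ᵥ x t)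
      =O[𝓝 0] fun h => h ^ 5 := by
  have hD : ∀ j < 4, Differentiable ℝ (iteratedDeriv j Q) :=
    fun j hj => hQ.differentiable_iteratedDeriv j (by exact_mod_cast hj)
  have h4 := (differentiableAt_odeDerivMatrix ((hD 0 (by norm_num)) t) ((hD 1 (by norm_num)) t)
    ((hD 2 (by norm_num)) t) ((hD 3 (by norm_num)) t) 4).hasDerivAt.matrix_mulVec (hx t)
  simpa [sum_mulVec, smul_mulVec, odeDerivMatrix] using
    isBigO_sub_sum_pow_div_factorial_smul (m := 4) (x₀ := t) (f := fun k v =>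
        odeDerivMatrix (Q v) (iteratedDeriv 1 Q v) (iteratedDeriv 2 Q v) (iteratedDeriv 3 Q v) k
          *ᵥ x v)
      (fun k hk => hasDerivAt_odeDerivMatrix_mulVec (hQ.of_le (by norm_num)) hx hk)
      h4.differentiableAt

end OdeTaylor

section TransitionPolynomial

variable {A : Type*} [Ring A] [Algebra ℝ A]

theorem exists_taylor_sub_mul_taylor_eq_pow_five_smul (c : ℕ → A) (hc : c 0 = 1) (s : ℝ)
    (T2 T3 T4 : A)
    (hT2 : T2 = ((2 * s - 1) / 2 : ℝ) • c 2 - (s - 1 : ℝ) • c 1 ^ 2)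
    (hT3 : T3 = ((3 * s ^ 2 - 3 * s + 1) / 6 : ℝ) • c 3
      - ((s - 1) ^ 2 / 2 : ℝ) • (c 1 * c 2)
      - ((2 * s - 1) * (s - 1) / 2 : ℝ) • (c 2 * c 1)
      + ((s - 1) ^ 2 : ℝ) • c 1 ^ 3)
    (hT4 : T4 = ((2 * s - 1) * (2 * s ^ 2 - 2 * s + 1) / 24 : ℝ) • c 4
      - ((s - 1) ^ 3 / 6 : ℝ) • (c 1 * c 3)
      - ((s - 1) ^ 2 / 2 : ℝ) • (T2 * c 2)
      - (s - 1 : ℝ) • (T3 * c 1)) :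
    ∃ r₀ r₁ r₂ r₃ : A, ∀ τ : ℝ,
      ∑ k ∈ range 5, ((s * τ) ^ k / k !) • c k
        - (1 + τ • c 1 + τ ^ 2 • T2 + τ ^ 3 • T3 + τ ^ 4 • T4)
          * ∑ k ∈ range 5, (((s - 1) * τ) ^ k / k !) • c k
      = τ ^ 5 • (r₀ + τ • r₁ + τ ^ 2 • r₂ + τ ^ 3 • r₃) := by
  -- the coefficient of `τ ^ (5 + j)` is `-∑_{i + k = 5 + j} (s - 1) ^ k / k! • Tᵢ * c k`,
  -- with `T₁ = c 1`
  refine ⟨-(((s - 1) ^ 4 / 24) • (c 1 * c 4) + ((s - 1) ^ 3 / 6) • (T2 * c 3)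
      + ((s - 1) ^ 2 / 2) • (T3 * c 2) + (s - 1) • (T4 * c 1)),
    -(((s - 1) ^ 4 / 24) • (T2 * c 4) + ((s - 1) ^ 3 / 6) • (T3 * c 3)
      + ((s - 1) ^ 2 / 2) • (T4 * c 2)),
    -(((s - 1) ^ 4 / 24) • (T3 * c 4) + ((s - 1) ^ 3 / 6) • (T4 * c 3)),
    -(((s - 1) ^ 4 / 24) • (T4 * c 4)), fun τ => ?_⟩
  simp only [sum_range_succ, sum_range_zero, hc, zero_add]
  norm_num [Nat.factorial]
  rw [hT4, hT3, hT2]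
  simp only [mul_add, add_mul, sub_mul, mul_sub, smul_mul_assoc, mul_smul_comm, one_mul, mul_one,
    smul_smul, mul_assoc, smul_sub, smul_add, pow_succ, pow_zero]
  module

end TransitionPolynomial

theorem fourth_order_consistency_general
    {n : ℕ}
    (Q : ℝ → Matrix (Fin n) (Fin n) ℂ) (hQ : ContDiff ℝ 4 Q)
    (x : ℝ → Fin n → ℂ)
    (hx : ∀ u : ℝ, HasDerivAt x ((Q u).mulVec (x u)) u)
    (t s : ℝ)
    (Q1 Q1' Q1'' Q1''' Q2 Q3 Q4 T2 T3 T4 : Matrix (Fin n) (Fin n) ℂ)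
    (hQ1 : Q1 = Q t)
    (hQ1' : Q1' = iteratedDeriv 1 Q t)
    (hQ1'' : Q1'' = iteratedDeriv 2 Q t)
    (hQ1''' : Q1''' = iteratedDeriv 3 Q t)
    (hQ2 : Q2 = Q1' + Q1 ^ 2)
    (hQ3 : Q3 = Q1'' + 2 • (Q1' * Q1) + Q1 * Q1' + Q1 ^ 3)
    (hQ4 : Q4 = Q1''' + 3 • (Q1'' * Q1) + Q1 * Q1'' + 3 • (Q1' ^ 2)
      + 3 • (Q1' * Q1 ^ 2) + 2 • (Q1 * Q1' * Q1) + Q1 ^ 2 * Q1' + Q1 ^ 4)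
    (hT2 : T2 = ((2 * s - 1) / 2 : ℝ) • Q2 - (s - 1 : ℝ) • Q1 ^ 2)
    (hT3 : T3 = ((3 * s ^ 2 - 3 * s + 1) / 6 : ℝ) • Q3
      - ((s - 1) ^ 2 / 2 : ℝ) • (Q1 * Q2)
      - ((2 * s - 1) * (s - 1) / 2 : ℝ) • (Q2 * Q1)
      + ((s - 1) ^ 2 : ℝ) • Q1 ^ 3)
    (hT4 : T4 = ((2 * s - 1) * (2 * s ^ 2 - 2 * s + 1) / 24 : ℝ) • Q4
      - ((s - 1) ^ 3 / 6 : ℝ) • (Q1 * Q3)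
      - ((s - 1) ^ 2 / 2 : ℝ) • (T2 * Q2)
      - (s - 1 : ℝ) • (T3 * Q1)) :
    (fun τ : ℝ =>
        x (t + s * τ) -
          (1 + τ • Q1 + τ ^ 2 • T2 + τ ^ 3 • T3 + τ ^ 4 • T4).mulVec
            (x (t + (s - 1) * τ)))
      =O[𝓝 0] fun τ => τ ^ 5 := by
  subst hQ1 hQ1' hQ1'' hQ1''' hQ2 hQ3 hQ4
  have htaylor (c : ℝ) := (isBigO_sub_taylor_of_hasDerivAt_mulVec hQ hx t).comp_const_mul c
  set C := odeDerivMatrix (Q t) (iteratedDeriv 1 Q t) (iteratedDeriv 2 Q t) (iteratedDeriv 3 Q t)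
  obtain ⟨r₀, r₁, r₂, r₃, hr⟩ :=
    exists_taylor_sub_mul_taylor_eq_pow_five_smul C rfl s T2 T3 T4 hT2 hT3 hT4
  have hC₁ : C 1 = Q t := rfl
  rw [hC₁] at hr
  have hT : (fun τ : ℝ => 1 + τ • Q t + τ ^ 2 • T2 + τ ^ 3 • T3 + τ ^ 4 • T4) =O[𝓝 0]
      fun _ => (1 : ℝ) := ((by fun_prop : Continuous _).tendsto 0).isBigO_one ℝ
  have hR : (fun τ : ℝ => r₀ + τ • r₁ + τ ^ 2 • r₂ + τ ^ 3 • r₃) =O[𝓝 0] fun _ => (1 : ℝ) :=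
    ((by fun_prop : Continuous _).tendsto 0).isBigO_one ℝ
  have hx₅ : (fun τ : ℝ => τ ^ 5 • x t) =O[𝓝 0] fun τ => τ ^ 5 :=
    IsBigO.of_bound ‖x t‖ (.of_forall fun τ => by rw [norm_smul, mul_comm])
  -- `x (t + sτ) - T τ x (t + (s-1)τ) = Eₛ - T τ E_{s-1} + (S (sτ) - T τ S ((s-1)τ)) x t`,
  -- where `E_c` is the Taylor remainder of `x` at `t` along `h = cτ`
  refine (((htaylor s).sub (hT.matrix_mulVec (htaylor (s - 1)))).add
    (hR.matrix_mulVec hx₅)).congr_left fun τ => ?_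
  rw [mulVec_smul, ← smul_mulVec, ← hr τ]
  simp only [mulVec_sub, sub_mulVec, mulVec_mulVec]
  abel

/-- fourth-order consistency of the one-step scheme with transition matrix
`T(τ) = I + τ·Q(t) + τ²·T₂ + τ³·T₃ + τ⁴·T₄`. -/
theorem fourth_order_consistency
    {n : ℕ} (hn : 1 ≤ n)
    (Q : ℝ → Matrix (Fin n) (Fin n) ℂ) (hQ : ContDiff ℝ 4 Q)
    (x : ℝ → Fin n → ℂ)
    (hx : ∀ u : ℝ, HasDerivAt x ((Q u).mulVec (x u)) u)
    (t s : ℝ)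
    (Q1 Q1' Q1'' Q1''' Q2 Q3 Q4 T2 T3 T4 : Matrix (Fin n) (Fin n) ℂ)
    (hQ1 : Q1 = Q t)
    (hQ1' : Q1' = iteratedDeriv 1 Q t)
    (hQ1'' : Q1'' = iteratedDeriv 2 Q t)
    (hQ1''' : Q1''' = iteratedDeriv 3 Q t)
    (hQ2 : Q2 = Q1' + Q1 ^ 2)
    (hQ3 : Q3 = Q1'' + 2 • (Q1' * Q1) + Q1 * Q1' + Q1 ^ 3)
    (hQ4 : Q4 = Q1''' + 3 • (Q1'' * Q1) + Q1 * Q1'' + 3 • (Q1' ^ 2)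
      + 3 • (Q1' * Q1 ^ 2) + 2 • (Q1 * Q1' * Q1) + Q1 ^ 2 * Q1' + Q1 ^ 4)
    (hT2 : T2 = ((2 * s - 1) / 2 : ℝ) • Q2 - (s - 1 : ℝ) • Q1 ^ 2)
    (hT3 : T3 = ((3 * s ^ 2 - 3 * s + 1) / 6 : ℝ) • Q3
      - ((s - 1) ^ 2 / 2 : ℝ) • (Q1 * Q2)
      - ((2 * s - 1) * (s - 1) / 2 : ℝ) • (Q2 * Q1)
      + ((s - 1) ^ 2 : ℝ) • Q1 ^ 3)
    (hT4 : T4 = ((2 * s - 1) * (2 * s ^ 2 - 2 * s + 1) / 24 : ℝ) • Q4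
      - ((s - 1) ^ 3 / 6 : ℝ) • (Q1 * Q3)
      - ((s - 1) ^ 2 / 2 : ℝ) • (T2 * Q2)
      - (s - 1 : ℝ) • (T3 * Q1)) :
    (fun τ : ℝ =>
        x (t + s * τ) -
          (1 + τ • Q1 + τ ^ 2 • T2 + τ ^ 3 • T3 + τ ^ 4 • T4).mulVec
            (x (t + (s - 1) * τ)))
      =O[𝓝 0] fun τ => τ ^ 5 :=
  fourth_order_consistency_general Q hQ x hx t s Q1 Q1' Q1'' Q1''' Q2 Q3 Q4 T2 T3 T4 hQ1 hQ1' hQ1''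
    hQ1''' hQ2 hQ3 hQ4 hT2 hT3 hT4
end

section
/- Let n ≥ 1, let Q : ℝ → Mₙ(ℂ) be four times continuously differentiable, fix t ∈ ℝ and s ∈ ℝ, and suppose A₁, A₂, A₃, A₄ ∈ Mₙ(ℂ) are such that for every differentiable x : ℝ → ℂⁿ with x'(u) = Q(u)·x(u) for all u, one has x(t + s·τ) − (I + τ·A₁ + τ²·A₂ + τ³·A₃ + τ⁴·A₄)·x(t + (s−1)·τ) = o(τ⁴) as τ → 0. Then necessarily A₁ = Q(t), A₂ = T₂, A₃ = T₃ and A₄ = T₄, where T₂, T₃, T₄ are the matrices defined in the context. -/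
/-!
For every `v` the linear equation `x' = Q x` has a global solution with `x t = v` (the sum of its
Picard iterates), and because `Q` is `C⁴` this solution has a fourth-order Taylor expansion at `t`
whose coefficients are `x⁽ᵏ⁾(t) = Qₖ v`. Substituting the expansions of `x (t + s τ)` and
`x (t + (s - 1) τ)` into the hypothesis leaves a polynomial in `τ` which is `o(τ⁴)`, so its
coefficients of `τ, …, τ⁴` vanish:
`(sᵏ / k!) Qₖ = ∑_{i + j = k} ((s - 1)ⁱ / i!) Aⱼ Qᵢ` with `A₀ = 1`, `Q₀ = 1`.
This triangular system determines `A₁, …, A₄` one after another, giving `Q(t), T₂, T₃, T₄`.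
-/

open Matrix Filter Asymptotics
open scoped Topology Nat

attribute [local instance] Matrix.normedAddCommGroup Matrix.normedSpace

noncomputable def Matrix.mulVecL (𝕜 m n : Type*) [RCLike 𝕜] [Fintype m] [Fintype n] :
    Matrix m n 𝕜 →L[ℝ] (n → 𝕜) →L[ℝ] (m → 𝕜) :=
  (Matrix.mulVecBilin ℝ ℝ).toContinuousBilinearMap

theorem HasDerivAt.matrix_mulVec_s1 {𝕜 m n : Type*} [RCLike 𝕜] [Fintype m] [Fintype n]
    {M : ℝ → Matrix m n 𝕜} {y : ℝ → n → 𝕜} {M' : Matrix m n 𝕜} {y' : n → 𝕜} {u : ℝ}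
    (hM : HasDerivAt M M' u) (hy : HasDerivAt y y' u) :
    HasDerivAt (fun u => M u *ᵥ y u) (M' *ᵥ y u + M u *ᵥ y') u :=
  ((Matrix.mulVecL 𝕜 m n).hasDerivAt_of_bilinear (fun _ => hM) (fun _ => hy)).congr_deriv
    (add_comm _ _)

section LinearODE

open Metric intervalIntegral MeasureTheory

variable {E : Type*} [NormedAddCommGroup E] [NormedSpace ℝ E] [CompleteSpace E]
  {A : ℝ → E →L[ℝ] E} {t₀ : ℝ} {v : E}

noncomputable def picardIterate (A : ℝ → E →L[ℝ] E) (t₀ : ℝ) (v : E) : ℕ → ℝ → E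
  | 0 => fun _ => v
  | k + 1 => fun u => ∫ r in t₀..u, A r (picardIterate A t₀ v k r)

lemma continuous_picardIterate (hA : Continuous A) (k : ℕ) :
    Continuous (picardIterate A t₀ v k) := by
  induction k with
  | zero => exact continuous_const
  | succ k ih =>
    exact continuous_iff_continuousAt.2 fun u =>
      ((hA.clm_apply ih).integral_hasStrictDerivAt t₀ u).hasDerivAt.continuousAt

lemma hasDerivAt_picardIterate_succ (hA : Continuous A) (k : ℕ) (u : ℝ) :
    HasDerivAt (picardIterate A t₀ v (k + 1)) (A u (picardIterate A t₀ v k u)) u :=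
  ((hA.clm_apply (continuous_picardIterate hA k)).integral_hasStrictDerivAt t₀ u).hasDerivAt

lemma norm_picardIterate_le (hA : Continuous A) {R M : ℝ}
    (hM : ∀ r ∈ closedBall t₀ R, ‖A r‖ ≤ M) (k : ℕ) {u : ℝ} (hu : u ∈ closedBall t₀ R) :
    ‖picardIterate A t₀ v k u‖ ≤ ‖v‖ * (M * |u - t₀|) ^ k / k ! := by
  induction k generalizing u with
  | zero => simp [picardIterate]
  | succ k ih =>
    have hM0 : 0 ≤ M :=
      (norm_nonneg _).trans (hM t₀ (mem_closedBall_self (nonempty_closedBall.1 ⟨u, hu⟩)))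
    have hsub : ∀ ρ ∈ Set.uIoc t₀ u, ρ ∈ closedBall t₀ R := fun ρ hρ =>
      mem_closedBall'.2 ((Real.dist_left_le_of_mem_uIcc (Set.uIoc_subset_uIcc hρ)).trans
        (mem_closedBall'.1 hu))
    calc ‖picardIterate A t₀ v (k + 1) u‖
        ≤ ∫ ρ in Set.uIoc t₀ u, ‖A ρ (picardIterate A t₀ v k ρ)‖ :=
          norm_integral_le_integral_norm_uIoc
      _ ≤ ∫ ρ in Set.uIoc t₀ u, ‖v‖ * M ^ (k + 1) / k ! * |ρ - t₀| ^ k := by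
          refine setIntegral_mono_on
            (hA.clm_apply (continuous_picardIterate hA k)).norm.integrableOn_uIoc
            (Continuous.integrableOn_uIoc (by fun_prop))
            measurableSet_uIoc fun ρ hρ => ?_
          calc ‖A ρ (picardIterate A t₀ v k ρ)‖
              ≤ ‖A ρ‖ * ‖picardIterate A t₀ v k ρ‖ := (A ρ).le_opNorm _
            _ ≤ M * (‖v‖ * (M * |ρ - t₀|) ^ k / k !) :=
                mul_le_mul (hM ρ (hsub ρ hρ)) (ih (hsub ρ hρ)) (norm_nonneg _) hM0
            _ = ‖v‖ * M ^ (k + 1) / k ! * |ρ - t₀| ^ k := by ring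
      _ = ‖v‖ * (M * |u - t₀|) ^ (k + 1) / (k + 1)! := by
          rw [MeasureTheory.integral_const_mul, integral_pow_abs_sub_uIoc, Nat.factorial_succ]
          push_cast
          field_simp
          ring

theorem exists_eq_forall_hasDerivAt_clm_apply (hA : Continuous A) (t₀ : ℝ) (v : E) :
    ∃ x : ℝ → E, x t₀ = v ∧ ∀ u, HasDerivAt x (A u (x u)) u := by
  refine ⟨fun u => v + ∑' k, picardIterate A t₀ v (k + 1) u, by simp [picardIterate], fun u => ?_⟩
  set R := |u - t₀| + 1
  have hu : u ∈ ball t₀ R := by simp [R, Real.dist_eq]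
  obtain ⟨M, hM⟩ := (isCompact_closedBall t₀ R).exists_bound_of_continuousOn hA.continuousOn
  have hM0 : 0 ≤ M := (norm_nonneg _).trans (hM t₀ (mem_closedBall_self (by positivity)))
  have hbound (k : ℕ) (r : ℝ) (hr : r ∈ ball t₀ R) :
      ‖picardIterate A t₀ v k r‖ ≤ ‖v‖ * ((M * R) ^ k / k !) := by
    have hrR : |r - t₀| ≤ R := by rw [mem_ball, Real.dist_eq] at hr; exact hr.le
    calc ‖picardIterate A t₀ v k r‖ ≤ ‖v‖ * (M * |r - t₀|) ^ k / k ! :=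
          norm_picardIterate_le hA hM k (ball_subset_closedBall hr)
      _ ≤ ‖v‖ * ((M * R) ^ k / k !) := by
          rw [mul_div_assoc]; gcongr
  have hsum : Summable fun k => picardIterate A t₀ v k u :=
    .of_norm_bounded ((Real.summable_pow_div_factorial (M * R)).mul_left ‖v‖) fun k => hbound k u hu
  have hderiv := hasDerivAt_tsum_of_isPreconnected (g := fun k => picardIterate A t₀ v (k + 1))
    (((Real.summable_pow_div_factorial (M * R)).mul_left ‖v‖).mul_left M) isOpen_ball
    (convex_ball t₀ R).isPreconnected (fun k y _ => hasDerivAt_picardIterate_succ hA k y)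
    (fun k y hy => ((A y).le_opNorm _).trans
      (mul_le_mul (hM y (ball_subset_closedBall hy)) (hbound k y hy) (norm_nonneg _) hM0))
    (mem_ball_self (by positivity)) (by simp [picardIterate]) hu
  convert hderiv.const_add v using 1
  rw [← (A u).map_tsum hsum, hsum.tsum_eq_zero_add]
  rfl

end LinearODE

section TaylorChain

variable {E : Type*} [NormedAddCommGroup E] [NormedSpace ℝ E] {f : ℕ → ℝ → E} {N : ℕ}

lemma contDiff_of_hasDerivAt_chain (hf : ∀ k < N, ∀ u, HasDerivAt (f k) (f (k + 1) u) u)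
    (hN : Continuous (f N)) : ContDiff ℝ N (f 0) := by
  induction N generalizing f with
  | zero => exact contDiff_zero.2 hN
  | succ N ih =>
    have hderiv : deriv (f 0) = f 1 := funext fun u => (hf 0 N.succ_pos u).deriv
    push_cast
    refine contDiff_succ_iff_deriv.2 ⟨fun u => (hf 0 N.succ_pos u).differentiableAt, by simp, ?_⟩
    rw [hderiv]
    exact ih (f := fun k => f (k + 1)) (fun k hk => hf (k + 1) (by omega)) hN

lemma iteratedDeriv_eq_of_hasDerivAt_chain (hf : ∀ k < N, ∀ u, HasDerivAt (f k) (f (k + 1) u) u)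
    {k : ℕ} (hk : k ≤ N) : iteratedDeriv k (f 0) = f k := by
  induction k with
  | zero => exact iteratedDeriv_zero
  | succ k ih =>
    rw [iteratedDeriv_succ, ih (by omega)]
    exact funext fun u => (hf k hk u).deriv

theorem taylor_isLittleO_of_hasDerivAt_chain
    (hf : ∀ k < N, ∀ u, HasDerivAt (f k) (f (k + 1) u) u) (hN : Continuous (f N)) (a c : ℝ) :
    (fun τ : ℝ => f 0 (a + c * τ) - ∑ k ∈ Finset.range (N + 1), ((c * τ) ^ k / k !) • f k a)
      =o[𝓝 0] fun τ => τ ^ N := by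
  have htaylor := taylor_isLittleO_univ (x₀ := a) (contDiff_of_hasDerivAt_chain hf hN)
  have hlin : Tendsto (fun τ : ℝ => a + c * τ) (𝓝 0) (𝓝 a) :=
    ((continuous_const_add a).comp (continuous_const_mul c)).tendsto' 0 a (by simp)
  refine ((htaylor.comp_tendsto hlin).trans_isBigO ?_).congr_left fun τ => ?_
  · simpa [Function.comp_def, mul_pow] using
      (isBigO_refl (fun τ : ℝ => τ ^ N) (𝓝 0)).const_mul_left (c ^ N)
  · simp only [Function.comp_apply, taylor_within_apply, iteratedDerivWithin_univ]
    congr 1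
    refine Finset.sum_congr rfl fun k hk => ?_
    rw [iteratedDeriv_eq_of_hasDerivAt_chain hf (Finset.mem_range_succ_iff.1 hk)]
    congr 1
    ring

end TaylorChain

section Coefficients

variable {E : Type*} [NormedAddCommGroup E] [NormedSpace ℝ E]

lemma eq_zero_of_add_smul_isLittleO {c : E} {g : ℝ → E} (hg : ContinuousAt g 0) {m : ℕ}
    (h : (fun τ : ℝ => c + τ • g τ) =o[𝓝[≠] 0] fun τ => τ ^ m) : c = 0 := by
  have hpow : Tendsto (fun τ : ℝ => τ ^ m) (𝓝[≠] 0) (𝓝 (0 ^ m)) :=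
    ((continuous_pow m).tendsto 0).mono_left nhdsWithin_le_nhds
  have hzero := (isLittleO_one_iff ℝ).1 (h.trans_isBigO (hpow.isBigO_one ℝ))
  have hcont : ContinuousAt (fun τ : ℝ => c + τ • g τ) 0 := by fun_prop
  have hc : Tendsto (fun τ : ℝ => c + τ • g τ) (𝓝[≠] 0) (𝓝 c) := by
    simpa using hcont.tendsto.mono_left nhdsWithin_le_nhds
  exact tendsto_nhds_unique hc hzero

lemma isLittleO_pow_of_smul_isLittleO_pow_succ {g : ℝ → E} {m : ℕ}
    (h : (fun τ : ℝ => τ • g τ) =o[𝓝[≠] 0] fun τ => τ ^ (m + 1)) :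
    g =o[𝓝[≠] 0] fun τ => τ ^ m := by
  refine ((isBigO_refl (fun τ : ℝ => τ⁻¹) _).smul_isLittleO h).congr' ?_ ?_ <;>
    filter_upwards [self_mem_nhdsWithin] with τ hτ
  · simp [smul_smul, inv_mul_cancel₀ hτ]
  · simp [pow_succ', ← mul_assoc, inv_mul_cancel₀ hτ]

theorem coeff_eq_zero_of_sum_pow_smul_isLittleO {N m : ℕ} {c : Fin N → E}
    (h : (fun τ : ℝ => ∑ k : Fin N, τ ^ (k : ℕ) • c k) =o[𝓝[≠] 0] fun τ => τ ^ m)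
    (k : Fin N) (hk : (k : ℕ) ≤ m) : c k = 0 := by
  induction N generalizing m with
  | zero => exact k.elim0
  | succ N ih =>
    have hsplit : (fun τ : ℝ => ∑ k : Fin (N + 1), τ ^ (k : ℕ) • c k)
        = fun τ => c 0 + τ • ∑ k : Fin N, τ ^ (k : ℕ) • c k.succ := by
      ext τ
      simp [Fin.sum_univ_succ, Finset.smul_sum, smul_smul, pow_succ']
    rw [hsplit] at h
    have hc0 : c 0 = 0 := eq_zero_of_add_smul_isLittleO (by fun_prop) h
    refine Fin.cases (fun _ => hc0) (fun j hj => ?_) k hk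
    obtain ⟨m, rfl⟩ : ∃ m', m = m' + 1 := ⟨m - 1, by simp at hj; omega⟩
    simp only [hc0, zero_add] at h
    exact ih (isLittleO_pow_of_smul_isLittleO_pow_succ h) j (by simpa using hj)

end Coefficients

section LinearODEJet

variable {𝕜 ι : Type*} [RCLike 𝕜] [Fintype ι] [DecidableEq ι]

/-- The matrices `Qₖ` of the paper (with `Q₀ = 1`): every solution of `x' = Q x` satisfies
`x⁽ᵏ⁾(t) = linearODEJet Q t k *ᵥ x t`. -/
noncomputable def linearODEJet (Q : ℝ → Matrix ι ι 𝕜) (t : ℝ) : Fin 5 → Matrix ι ι 𝕜 :=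
  let Q₀ := Q t
  let Q₁ := iteratedDeriv 1 Q t
  let Q₂ := iteratedDeriv 2 Q t
  let Q₃ := iteratedDeriv 3 Q t
  ![1, Q₀, Q₁ + Q₀ ^ 2, Q₂ + 2 • (Q₁ * Q₀) + Q₀ * Q₁ + Q₀ ^ 3,
    Q₃ + 3 • (Q₂ * Q₀) + Q₀ * Q₂ + 3 • (Q₁ ^ 2) + 3 • (Q₁ * Q₀ ^ 2) + 2 • (Q₀ * Q₁ * Q₀)
      + Q₀ ^ 2 * Q₁ + Q₀ ^ 4]

lemma linearODEJet_zero (Q : ℝ → Matrix ι ι 𝕜) (t : ℝ) : linearODEJet Q t 0 = 1 := rfl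

theorem taylor_isLittleO_linearODEJet {Q : ℝ → Matrix ι ι 𝕜}
    (hQ : ContDiff ℝ 4 Q) {x : ℝ → ι → 𝕜} (hx : ∀ u, HasDerivAt x (Q u *ᵥ x u) u) (t c : ℝ) :
    (fun τ : ℝ => x (t + c * τ) -
      ∑ k : Fin 5, ((c * τ) ^ (k : ℕ) / (k : ℕ)!) • (linearODEJet Q t k *ᵥ x t))
      =o[𝓝 0] fun τ => τ ^ 4 := by
  set D := fun k => iteratedDeriv k Q
  have hD : ∀ k < 4, ∀ u, HasDerivAt (D k) (D (k + 1) u) u := fun k hk u => by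
    simp only [D, iteratedDeriv_succ]
    exact ((hQ.differentiable_iteratedDeriv k (by exact_mod_cast hk)) u).hasDerivAt
  have hDc : ∀ k ≤ 4, Continuous (D k) := fun k hk =>
    hQ.continuous_iteratedDeriv k (by exact_mod_cast hk)
  set x₁ := fun u => D 0 u *ᵥ x u
  set x₂ := fun u => D 1 u *ᵥ x u + D 0 u *ᵥ x₁ u
  set x₃ := fun u => D 2 u *ᵥ x u + 2 • D 1 u *ᵥ x₁ u + D 0 u *ᵥ x₂ u
  set x₄ := fun u => D 3 u *ᵥ x u + 3 • D 2 u *ᵥ x₁ u + 3 • D 1 u *ᵥ x₂ u + D 0 u *ᵥ x₃ u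
  have h₀ : ∀ u, HasDerivAt x (x₁ u) u := by simpa [x₁, D] using hx
  have h₁ : ∀ u, HasDerivAt x₁ (x₂ u) u := fun u =>
    ((hD 0 (by norm_num) u).matrix_mulVec_s1 (h₀ u)).congr_deriv (by simp [x₂])
  have h₂ : ∀ u, HasDerivAt x₂ (x₃ u) u := fun u =>
    (((hD 1 (by norm_num) u).matrix_mulVec_s1 (h₀ u)).add
      ((hD 0 (by norm_num) u).matrix_mulVec_s1 (h₁ u))).congr_deriv (by simp only [x₃]; abel)
  have h₃ : ∀ u, HasDerivAt x₃ (x₄ u) u := fun u =>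
    ((((hD 2 (by norm_num) u).matrix_mulVec_s1 (h₀ u)).add
      (((hD 1 (by norm_num) u).matrix_mulVec_s1 (h₁ u)).const_smul 2)).add
      ((hD 0 (by norm_num) u).matrix_mulVec_s1 (h₂ u))).congr_deriv (by simp only [x₄]; abel)
  have hxc : Continuous x := continuous_iff_continuousAt.2 fun u => (h₀ u).continuousAt
  have hx₄c : Continuous x₄ := by
    have := hDc 0 (by norm_num); have := hDc 1 (by norm_num)
    have := hDc 2 (by norm_num); have := hDc 3 (by norm_num)
    simp only [x₄, x₃, x₂, x₁]
    fun_prop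
  let f : ℕ → ℝ → ι → 𝕜 := fun | 0 => x | 1 => x₁ | 2 => x₂ | 3 => x₃ | _ => x₄
  have hf : ∀ k < 4, ∀ u, HasDerivAt (f k) (f (k + 1) u) u := by
    intro k hk
    interval_cases k
    exacts [h₀, h₁, h₂, h₃]
  refine (taylor_isLittleO_of_hasDerivAt_chain hf hx₄c t c).congr_left fun τ => ?_
  simp only [Finset.sum_range, Fin.sum_univ_succ, Fin.sum_univ_zero]
  simp only [f, x₁, x₂, x₃, x₄, D, linearODEJet, Fin.isValue, Fin.coe_ofNat_eq_mod, Nat.reduceMod,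
    Nat.reduceAdd, Fin.succ_zero_eq_one, Fin.succ_one_eq_two, Fin.reduceSucc, Matrix.cons_val,
    Matrix.cons_val_zero, Matrix.cons_val_one, Nat.factorial, iteratedDeriv_zero, iteratedDeriv_one,
    Matrix.one_mulVec, Matrix.add_mulVec, Matrix.mulVec_add, Matrix.smul_mulVec, Matrix.mulVec_smul,
    ← Matrix.mulVec_mulVec, pow_succ, pow_zero, one_mul]
  module

theorem order_conditions_mulVec {x : ℝ → ι → 𝕜} {X : Fin 5 → ι → 𝕜} {t s : ℝ}
    {A₁ A₂ A₃ A₄ : Matrix ι ι 𝕜}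
    (hx : ∀ c : ℝ, (fun τ : ℝ => x (t + c * τ) - ∑ k : Fin 5, ((c * τ) ^ (k : ℕ) / (k : ℕ)!) • X k)
      =o[𝓝 0] fun τ => τ ^ 4)
    (h : (fun τ : ℝ => x (t + s * τ) -
      (1 + τ • A₁ + τ ^ 2 • A₂ + τ ^ 3 • A₃ + τ ^ 4 • A₄) *ᵥ x (t + (s - 1) * τ))
      =o[𝓝 0] fun τ => τ ^ 4) :
    s • X 1 = A₁ *ᵥ X 0 + (s - 1) • X 1 ∧
    (s ^ 2 / 2) • X 2 = A₂ *ᵥ X 0 + (s - 1) • A₁ *ᵥ X 1 + ((s - 1) ^ 2 / 2) • X 2 ∧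
    (s ^ 3 / 6) • X 3 = A₃ *ᵥ X 0 + (s - 1) • A₂ *ᵥ X 1 + ((s - 1) ^ 2 / 2) • A₁ *ᵥ X 2
      + ((s - 1) ^ 3 / 6) • X 3 ∧
    (s ^ 4 / 24) • X 4 = A₄ *ᵥ X 0 + (s - 1) • A₃ *ᵥ X 1 + ((s - 1) ^ 2 / 2) • A₂ *ᵥ X 2
      + ((s - 1) ^ 3 / 6) • A₁ *ᵥ X 3 + ((s - 1) ^ 4 / 24) • X 4 := by
  set M : ℝ → Matrix ι ι 𝕜 := fun τ => 1 + τ • A₁ + τ ^ 2 • A₂ + τ ^ 3 • A₃ + τ ^ 4 • A₄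
  set T : ℝ → ℝ → ι → 𝕜 := fun c τ => ∑ k : Fin 5, ((c * τ) ^ (k : ℕ) / (k : ℕ)!) • X k
  have hM : (fun τ => M τ *ᵥ (x (t + (s - 1) * τ) - T (s - 1) τ)) =o[𝓝 0] fun τ => τ ^ 4 := by
    have hbdd : (fun τ => ‖M τ‖) =O[𝓝 0] fun _ => (1 : ℝ) :=
      ((by fun_prop : Continuous M).norm.tendsto 0).isBigO_one ℝ
    exact (Matrix.mulVecL 𝕜 ι ι).isBoundedBilinearMap.isBigO_comp.trans_isLittleO
      ((hbdd.mul_isLittleO (hx (s - 1)).norm_left).congr_right (by simp))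
  have hpoly : (fun τ => T s τ - M τ *ᵥ T (s - 1) τ) =o[𝓝 0] fun τ => τ ^ 4 :=
    ((h.sub (hx s)).add hM).congr_left fun τ => by simp only [Matrix.mulVec_sub]; abel
  -- the coefficients of `τ⁰, …, τ⁸` in `T s τ - M τ *ᵥ T (s - 1) τ`
  have hcoeff := coeff_eq_zero_of_sum_pow_smul_isLittleO (m := 4) (c := ![0,
    s • X 1 - (A₁ *ᵥ X 0 + (s - 1) • X 1),
    (s ^ 2 / 2) • X 2 - (A₂ *ᵥ X 0 + (s - 1) • A₁ *ᵥ X 1 + ((s - 1) ^ 2 / 2) • X 2),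
    (s ^ 3 / 6) • X 3 - (A₃ *ᵥ X 0 + (s - 1) • A₂ *ᵥ X 1 + ((s - 1) ^ 2 / 2) • A₁ *ᵥ X 2
      + ((s - 1) ^ 3 / 6) • X 3),
    (s ^ 4 / 24) • X 4 - (A₄ *ᵥ X 0 + (s - 1) • A₃ *ᵥ X 1 + ((s - 1) ^ 2 / 2) • A₂ *ᵥ X 2
      + ((s - 1) ^ 3 / 6) • A₁ *ᵥ X 3 + ((s - 1) ^ 4 / 24) • X 4),
    -((s - 1) • A₄ *ᵥ X 1 + ((s - 1) ^ 2 / 2) • A₃ *ᵥ X 2 + ((s - 1) ^ 3 / 6) • A₂ *ᵥ X 3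
      + ((s - 1) ^ 4 / 24) • A₁ *ᵥ X 4),
    -(((s - 1) ^ 2 / 2) • A₄ *ᵥ X 2 + ((s - 1) ^ 3 / 6) • A₃ *ᵥ X 3
      + ((s - 1) ^ 4 / 24) • A₂ *ᵥ X 4),
    -(((s - 1) ^ 3 / 6) • A₄ *ᵥ X 3 + ((s - 1) ^ 4 / 24) • A₃ *ᵥ X 4),
    -(((s - 1) ^ 4 / 24) • A₄ *ᵥ X 4)])
    ((hpoly.mono nhdsWithin_le_nhds).congr_left fun τ => by
      simp only [T, M, Fin.sum_univ_succ, Fin.sum_univ_zero, Matrix.cons_val_zero,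
        Matrix.cons_val_succ, Fin.val_zero, Fin.val_succ, Nat.factorial, Matrix.add_mulVec,
        Matrix.mulVec_add, Matrix.mulVec_smul, Matrix.smul_mulVec, Matrix.one_mulVec,
        Matrix.mulVec_zero, Fin.succ_zero_eq_one, Fin.succ_one_eq_two, Fin.reduceSucc]
      module)
  exact ⟨sub_eq_zero.1 (by simpa using hcoeff 1 (by decide)),
    sub_eq_zero.1 (by simpa using hcoeff 2 (by decide)),
    sub_eq_zero.1 (by simpa using hcoeff 3 (by decide)),
    sub_eq_zero.1 (by simpa using hcoeff 4 (by decide))⟩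

theorem order_conditions {Q : ℝ → Matrix ι ι 𝕜} (hQ : ContDiff ℝ 4 Q) {t s : ℝ}
    {A₁ A₂ A₃ A₄ : Matrix ι ι 𝕜}
    (h : ∀ x : ℝ → ι → 𝕜, (∀ u, HasDerivAt x (Q u *ᵥ x u) u) →
      (fun τ : ℝ => x (t + s * τ) -
        (1 + τ • A₁ + τ ^ 2 • A₂ + τ ^ 3 • A₃ + τ ^ 4 • A₄) *ᵥ x (t + (s - 1) * τ))
        =o[𝓝 0] fun τ => τ ^ 4) :
    s • linearODEJet Q t 1 = A₁ + (s - 1) • linearODEJet Q t 1 ∧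
    (s ^ 2 / 2) • linearODEJet Q t 2 = A₂ + (s - 1) • (A₁ * linearODEJet Q t 1)
      + ((s - 1) ^ 2 / 2) • linearODEJet Q t 2 ∧
    (s ^ 3 / 6) • linearODEJet Q t 3 = A₃ + (s - 1) • (A₂ * linearODEJet Q t 1)
      + ((s - 1) ^ 2 / 2) • (A₁ * linearODEJet Q t 2) + ((s - 1) ^ 3 / 6) • linearODEJet Q t 3 ∧
    (s ^ 4 / 24) • linearODEJet Q t 4 = A₄ + (s - 1) • (A₃ * linearODEJet Q t 1)
      + ((s - 1) ^ 2 / 2) • (A₂ * linearODEJet Q t 2)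
      + ((s - 1) ^ 3 / 6) • (A₁ * linearODEJet Q t 3)
      + ((s - 1) ^ 4 / 24) • linearODEJet Q t 4 := by
  have hA : Continuous fun u => Matrix.mulVecL 𝕜 ι ι (Q u) :=
    (Matrix.mulVecL 𝕜 ι ι).continuous.comp hQ.continuous
  choose sol hsol_t hsol using exists_eq_forall_hasDerivAt_clm_apply hA t
  have key (v : ι → 𝕜) :=
    order_conditions_mulVec (taylor_isLittleO_linearODEJet hQ (hsol v) t) (h _ (hsol v))
  simp only [hsol_t, linearODEJet_zero, Matrix.one_mulVec] at key
  refine ⟨Matrix.ext_iff_mulVec.2 fun v => ?_, Matrix.ext_iff_mulVec.2 fun v => ?_,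
    Matrix.ext_iff_mulVec.2 fun v => ?_, Matrix.ext_iff_mulVec.2 fun v => ?_⟩ <;>
    simp only [Matrix.add_mulVec, Matrix.smul_mulVec, ← Matrix.mulVec_mulVec]
  exacts [(key v).1, (key v).2.1, (key v).2.2.1, (key v).2.2.2]

end LinearODEJet

theorem fourth_order_necessity_general
    {n : ℕ}
    (Q : ℝ → Matrix (Fin n) (Fin n) ℂ) (hQ : ContDiff ℝ 4 Q)
    (t s : ℝ)
    (A₁ A₂ A₃ A₄ : Matrix (Fin n) (Fin n) ℂ)
    (Q1 Q1' Q1'' Q1''' Q2 Q3 Q4 T2 T3 T4 : Matrix (Fin n) (Fin n) ℂ)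
    (hQ1 : Q1 = Q t)
    (hQ1' : Q1' = iteratedDeriv 1 Q t)
    (hQ1'' : Q1'' = iteratedDeriv 2 Q t)
    (hQ1''' : Q1''' = iteratedDeriv 3 Q t)
    (hQ2 : Q2 = Q1' + Q1 ^ 2)
    (hQ3 : Q3 = Q1'' + 2 • (Q1' * Q1) + Q1 * Q1' + Q1 ^ 3)
    (hQ4 : Q4 = Q1''' + 3 • (Q1'' * Q1) + Q1 * Q1'' + 3 • (Q1' ^ 2)
      + 3 • (Q1' * Q1 ^ 2) + 2 • (Q1 * Q1' * Q1) + Q1 ^ 2 * Q1' + Q1 ^ 4)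
    (hT2 : T2 = ((2 * s - 1) / 2 : ℝ) • Q2 - (s - 1 : ℝ) • Q1 ^ 2)
    (hT3 : T3 = ((3 * s ^ 2 - 3 * s + 1) / 6 : ℝ) • Q3
      - ((s - 1) ^ 2 / 2 : ℝ) • (Q1 * Q2)
      - ((2 * s - 1) * (s - 1) / 2 : ℝ) • (Q2 * Q1)
      + ((s - 1) ^ 2 : ℝ) • Q1 ^ 3)
    (hT4 : T4 = ((2 * s - 1) * (2 * s ^ 2 - 2 * s + 1) / 24 : ℝ) • Q4
      - ((s - 1) ^ 3 / 6 : ℝ) • (Q1 * Q3)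
      - ((s - 1) ^ 2 / 2 : ℝ) • (T2 * Q2)
      - (s - 1 : ℝ) • (T3 * Q1))
    (h : ∀ x : ℝ → Fin n → ℂ, (∀ u : ℝ, HasDerivAt x ((Q u).mulVec (x u)) u) →
      (fun τ : ℝ =>
          x (t + s * τ) -
            (1 + τ • A₁ + τ ^ 2 • A₂ + τ ^ 3 • A₃ + τ ^ 4 • A₄).mulVec
              (x (t + (s - 1) * τ)))
        =o[𝓝 0] fun τ => τ ^ 4) :
    A₁ = Q1 ∧ A₂ = T2 ∧ A₃ = T3 ∧ A₄ = T4 := by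
  obtain ⟨h₁, h₂, h₃, h₄⟩ := order_conditions hQ h
  obtain ⟨hJ₁, hJ₂, hJ₃, hJ₄⟩ : linearODEJet Q t 1 = Q1 ∧ linearODEJet Q t 2 = Q2 ∧
      linearODEJet Q t 3 = Q3 ∧ linearODEJet Q t 4 = Q4 := by
    subst_vars; exact ⟨rfl, rfl, rfl, rfl⟩
  simp only [hJ₁, hJ₂, hJ₃, hJ₄] at h₁ h₂ h₃ h₄
  have hA₁ : A₁ = Q1 := by linear_combination (norm := module) -h₁
  have hA₂ : A₂ = T2 := by
    rw [hA₁, ← sq] at h₂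
    rw [hT2]
    linear_combination (norm := module) -h₂
  have hA₃ : A₃ = T3 := by
    rw [hA₁, hA₂, hT2, sub_mul, smul_mul_assoc, smul_mul_assoc, ← pow_succ] at h₃
    rw [hT3]
    linear_combination (norm := module) -h₃
  refine ⟨hA₁, hA₂, hA₃, ?_⟩
  rw [hA₁, hA₂, hA₃] at h₄
  rw [hT4]
  linear_combination (norm := module) -h₄

/-- necessity — a fourth-order one-step scheme must have the expansion
`T = I + τ·Q(t) + τ²·T₂ + τ³·T₃ + τ⁴·T₄`. -/
theorem fourth_order_necessity
    {n : ℕ} (hn : 1 ≤ n)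
    (Q : ℝ → Matrix (Fin n) (Fin n) ℂ) (hQ : ContDiff ℝ 4 Q)
    (t s : ℝ)
    (A₁ A₂ A₃ A₄ : Matrix (Fin n) (Fin n) ℂ)
    (Q1 Q1' Q1'' Q1''' Q2 Q3 Q4 T2 T3 T4 : Matrix (Fin n) (Fin n) ℂ)
    (hQ1 : Q1 = Q t)
    (hQ1' : Q1' = iteratedDeriv 1 Q t)
    (hQ1'' : Q1'' = iteratedDeriv 2 Q t)
    (hQ1''' : Q1''' = iteratedDeriv 3 Q t)
    (hQ2 : Q2 = Q1' + Q1 ^ 2)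
    (hQ3 : Q3 = Q1'' + 2 • (Q1' * Q1) + Q1 * Q1' + Q1 ^ 3)
    (hQ4 : Q4 = Q1''' + 3 • (Q1'' * Q1) + Q1 * Q1'' + 3 • (Q1' ^ 2)
      + 3 • (Q1' * Q1 ^ 2) + 2 • (Q1 * Q1' * Q1) + Q1 ^ 2 * Q1' + Q1 ^ 4)
    (hT2 : T2 = ((2 * s - 1) / 2 : ℝ) • Q2 - (s - 1 : ℝ) • Q1 ^ 2)
    (hT3 : T3 = ((3 * s ^ 2 - 3 * s + 1) / 6 : ℝ) • Q3
      - ((s - 1) ^ 2 / 2 : ℝ) • (Q1 * Q2)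
      - ((2 * s - 1) * (s - 1) / 2 : ℝ) • (Q2 * Q1)
      + ((s - 1) ^ 2 : ℝ) • Q1 ^ 3)
    (hT4 : T4 = ((2 * s - 1) * (2 * s ^ 2 - 2 * s + 1) / 24 : ℝ) • Q4
      - ((s - 1) ^ 3 / 6 : ℝ) • (Q1 * Q3)
      - ((s - 1) ^ 2 / 2 : ℝ) • (T2 * Q2)
      - (s - 1 : ℝ) • (T3 * Q1))
    (h : ∀ x : ℝ → Fin n → ℂ, (∀ u : ℝ, HasDerivAt x ((Q u).mulVec (x u)) u) →
      (fun τ : ℝ =>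
          x (t + s * τ) -
            (1 + τ • A₁ + τ ^ 2 • A₂ + τ ^ 3 • A₃ + τ ^ 4 • A₄).mulVec
              (x (t + (s - 1) * τ)))
        =o[𝓝 0] fun τ => τ ^ 4) :
    A₁ = Q1 ∧ A₂ = T2 ∧ A₃ = T3 ∧ A₄ = T4 :=
  fourth_order_necessity_general Q hQ t s A₁ A₂ A₃ A₄ Q1 Q1' Q1'' Q1''' Q2 Q3 Q4 T2 T3 T4 hQ1 hQ1'
    hQ1'' hQ1''' hQ2 hQ3 hQ4 hT2 hT3 hT4 h
end

section
/- Let A, B, C ∈ Mₙ(ℂ) and define F₃ = C/24 + (BA − AB)/12. Then as τ → 0 (τ real), exp(τ·A + τ³·F₃) = I + τ·A + (τ²/2)·A² + τ³·(A³/6 + C/24 + (BA − AB)/12) + τ⁴·(A⁴/24 + (AC + CA)/48 + (BA² − A²B)/24) + O(τ⁵), where exp denotes the matrix exponential. (This is the fourth-order exponential scheme ES4: its Maclaurin expansion reproduces the symmetric fourth-order transition operator through order τ⁴.) -/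
/-!
Write `τ • A + τ ^ 3 • F = τ • y` with `y = A + τ ^ 2 • F`. Since `exp` is analytic, it differs
from its Taylor polynomial of degree four by `O(‖τ • y‖⁵) = O(τ⁵)`. Expanding only the quadratic
term of that polynomial, it differs from the fourth-order operator by
`τ³ (y³ - A³)/6 + τ⁴ (y⁴ - A⁴)/24 + τ⁶ F²/2`, and `y^k - A^k = O(y - A) = O(τ²)` because powers
are differentiable. For matrices one argues with the `L∞` operator norm, a ring norm that
dominates the entrywise norm.
-/

open Matrix Filter Asymptotics
open scoped Topology

namespace Asymptotics

theorem isBigO_smul_const {α E : Type*} [NormedAddCommGroup E] [NormedSpace ℝ E]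
    {l : Filter α} (g : α → ℝ) (M : E) : (fun x => g x • M) =O[l] g :=
  .of_bound ‖M‖ (.of_forall fun x => by rw [norm_smul, mul_comm])

theorem isBigO_pow_pow_of_le {k m : ℕ} (h : k ≤ m) :
    (fun τ : ℝ => τ ^ m) =O[𝓝 0] fun τ => τ ^ k := by
  rcases h.eq_or_lt with rfl | hlt
  · exact isBigO_refl _ _
  · exact (isLittleO_pow_pow hlt).isBigO

theorem IsBigO.pow_smul {E : Type*} [NormedAddCommGroup E] [NormedSpace ℝ E]
    {f : ℝ → E} {j : ℕ} (h : f =O[𝓝 0] fun τ => τ ^ j) (i : ℕ) :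
    (fun τ => τ ^ i • f τ) =O[𝓝 0] fun τ => τ ^ (i + j) := by
  simpa only [smul_eq_mul, ← pow_add] using (isBigO_refl (fun τ : ℝ => τ ^ i) _).smul h

end Asymptotics

open scoped Matrix.Norms.Operator in
theorem Matrix.norm_entry_le_linfty_opNorm {m n α : Type*} [Fintype m] [Fintype n]
    [SeminormedAddCommGroup α] (A : Matrix m n α) (i : m) (j : n) : ‖A i j‖ ≤ ‖A‖ :=
  (PiLp.norm_apply_le (WithLp.toLp 1 (A i)) j).trans
    (norm_le_pi_norm (fun i => WithLp.toLp 1 (A i)) i)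

/-- The symmetric fourth-order transition operator, with `F` standing for `F₃`. -/
noncomputable def fourthOrderTransition {𝔸 : Type*} [Ring 𝔸] [Algebra ℝ 𝔸] (A F : 𝔸) (τ : ℝ) :
    𝔸 :=
  1 + τ • A + (τ ^ 2 / 2 : ℝ) • A ^ 2 + τ ^ 3 • ((6 : ℝ)⁻¹ • A ^ 3 + F)
    + τ ^ 4 • ((24 : ℝ)⁻¹ • A ^ 4 + (2 : ℝ)⁻¹ • (A * F + F * A))

section

variable {𝔸 : Type*} [NormedRing 𝔸] [NormedAlgebra ℝ 𝔸]

theorem isBigO_pow_sub_pow_of_tendsto {α : Type*} {l : Filter α} {y : α → 𝔸} {a : 𝔸}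
    (hy : Tendsto y l (𝓝 a)) (k : ℕ) :
    (fun x => y x ^ k - a ^ k) =O[l] fun x => y x - a :=
  ((differentiableAt_pow (𝕜 := ℝ) k).hasFDerivAt.isBigO_sub).comp_tendsto hy

theorem partialSum_expSeries_sub_fourthOrderTransition (A F : 𝔸) (τ : ℝ) :
    (NormedSpace.expSeries ℝ 𝔸).partialSum 5 (τ • (A + τ ^ 2 • F))
        - fourthOrderTransition A F τ
      = τ ^ 3 • (6 : ℝ)⁻¹ • ((A + τ ^ 2 • F) ^ 3 - A ^ 3)
        + τ ^ 4 • (24 : ℝ)⁻¹ • ((A + τ ^ 2 • F) ^ 4 - A ^ 4)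
        + τ ^ 6 • (2 : ℝ)⁻¹ • F ^ 2 := by
  set y := A + τ ^ 2 • F with hy
  have hy2 : y ^ 2 = A ^ 2 + τ ^ 2 • (A * F + F * A) + τ ^ 4 • F ^ 2 := by
    simp only [hy, sq, add_mul, mul_add, smul_mul_assoc, mul_smul_comm]
    module
  simp only [FormalMultilinearSeries.partialSum, NormedSpace.expSeries_apply_eq, smul_pow,
    Finset.sum_range_succ, Finset.sum_range_zero, Nat.factorial_succ, Nat.factorial_zero,
    pow_zero, pow_one, fourthOrderTransition]
  rw [hy2]
  norm_num only [Nat.cast_ofNat, one_smul]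
  linear_combination (norm := module) τ • hy

theorem partialSum_expSeries_sub_fourthOrderTransition_isBigO (A F : 𝔸) :
    (fun τ : ℝ => (NormedSpace.expSeries ℝ 𝔸).partialSum 5 (τ • (A + τ ^ 2 • F))
        - fourthOrderTransition A F τ) =O[𝓝 0] fun τ => τ ^ 5 := by
  have hy : Tendsto (fun τ : ℝ => A + τ ^ 2 • F) (𝓝 0) (𝓝 A) :=
    Continuous.tendsto' (by fun_prop) 0 A (by simp)
  have hpow (k : ℕ) (c : ℝ) :
      (fun τ : ℝ => c • ((A + τ ^ 2 • F) ^ k - A ^ k)) =O[𝓝 0] fun τ => τ ^ 2 :=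
    ((isBigO_pow_sub_pow_of_tendsto hy k).trans
      (by simpa only [add_sub_cancel_left] using isBigO_smul_const (fun τ : ℝ => τ ^ 2) F)
      ).const_smul_left c
  simp only [partialSum_expSeries_sub_fourthOrderTransition]
  exact (((hpow 3 _).pow_smul 3).add
    (((hpow 4 _).pow_smul 4).trans (isBigO_pow_pow_of_le (by norm_num)))).add
    ((isBigO_smul_const _ _).trans (isBigO_pow_pow_of_le (by norm_num)))

theorem exp_sub_fourthOrderTransition_isBigO [CompleteSpace 𝔸] (A F : 𝔸) :
    (fun τ : ℝ => NormedSpace.exp (τ • A + τ ^ 3 • F) - fourthOrderTransition A F τ)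
      =O[𝓝 0] fun τ => τ ^ 5 := by
  have hx (τ : ℝ) : τ • A + τ ^ 3 • F = τ • (A + τ ^ 2 • F) := by module
  have hy : Tendsto (fun τ : ℝ => A + τ ^ 2 • F) (𝓝 0) (𝓝 A) :=
    Continuous.tendsto' (by fun_prop) 0 A (by simp)
  have hxO : (fun τ : ℝ => τ • (A + τ ^ 2 • F)) =O[𝓝 0] fun τ => τ := by
    simpa using (isBigO_refl (fun τ : ℝ => τ) _).smul (hy.isBigO_one (F := ℝ))
  have hexp := (((NormedSpace.exp_hasFPowerSeriesAt_zero (𝕂 := ℝ)).isBigO_sub_partialSum_pow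
    5).comp_tendsto (hxO.trans_tendsto tendsto_id)).trans (hxO.norm_left.pow 5)
  simp only [zero_add, Function.comp_def] at hexp
  simp only [hx]
  exact (hexp.add (partialSum_expSeries_sub_fourthOrderTransition_isBigO A F)).congr_left
    fun τ => sub_add_sub_cancel _ _ _

end

attribute [local instance] Matrix.normedAddCommGroup Matrix.normedSpace

/-- Maclaurin expansion of the ES4 exponential scheme
`exp(τ·A + τ³·F₃)` agrees with the symmetric fourth-order transition operator through `τ⁴`. -/
theorem ES4_expansion
    {n : ℕ} (A B C : Matrix (Fin n) (Fin n) ℂ)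
    (F₃ : Matrix (Fin n) (Fin n) ℂ)
    (hF₃ : F₃ = (24 : ℝ)⁻¹ • C + (12 : ℝ)⁻¹ • (B * A - A * B)) :
    (fun τ : ℝ =>
        NormedSpace.exp (τ • A + τ ^ 3 • F₃) -
          (1 + τ • A + (τ ^ 2 / 2 : ℝ) • A ^ 2
            + τ ^ 3 • ((6 : ℝ)⁻¹ • A ^ 3 + (24 : ℝ)⁻¹ • C + (12 : ℝ)⁻¹ • (B * A - A * B))
            + τ ^ 4 • ((24 : ℝ)⁻¹ • A ^ 4 + (48 : ℝ)⁻¹ • (A * C + C * A)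
              + (24 : ℝ)⁻¹ • (B * A ^ 2 - A ^ 2 * B))))
      =O[𝓝 0] fun τ => τ ^ 5 := by
  have h3 : (6 : ℝ)⁻¹ • A ^ 3 + (24 : ℝ)⁻¹ • C + (12 : ℝ)⁻¹ • (B * A - A * B)
      = (6 : ℝ)⁻¹ • A ^ 3 + F₃ := by rw [hF₃, add_assoc]
  have h4 : (24 : ℝ)⁻¹ • A ^ 4 + (48 : ℝ)⁻¹ • (A * C + C * A)
        + (24 : ℝ)⁻¹ • (B * A ^ 2 - A ^ 2 * B)
      = (24 : ℝ)⁻¹ • A ^ 4 + (2 : ℝ)⁻¹ • (A * F₃ + F₃ * A) := by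
    simp only [hF₃, sq, mul_add, add_mul, mul_sub, sub_mul, smul_mul_assoc, mul_smul_comm,
      mul_assoc]
    module
  rw [h3, h4]
  obtain ⟨c, hc0, hcO⟩ := open scoped Matrix.Norms.Operator in
    (exp_sub_fourthOrderTransition_isBigO A F₃).exists_nonneg
  have hc := open scoped Matrix.Norms.Operator in hcO.bound
  exact .of_bound c (hc.mono fun τ hτ => (Matrix.norm_le_iff (by positivity)).2
    fun i j => (Matrix.norm_entry_le_linfty_opNorm _ i j).trans hτ)
end

section
/- Let A, B, C ∈ Mₙ(ℂ). Then as τ → 0 (τ real), exp(τ·A) + (τ²/12)·(B·exp(τ·A) − exp(τ·A)·B) + (τ³/48)·(exp(τ·A)·C + C·exp(τ·A)) = I + τ·A + (τ²/2)·A² + τ³·(A³/6 + C/24 + (BA − AB)/12) + τ⁴·(A⁴/24 + (AC + CA)/48 + (BA² − A²B)/24) + O(τ⁵), where exp denotes the matrix exponential; i.e., this quasi-exponential expression agrees with the symmetric fourth-order transition operator through order τ⁴. -/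
open Matrix Filter Asymptotics
open scoped Topology

attribute [local instance] Matrix.normedAddCommGroup Matrix.normedSpace

open NormedSpace Finset

/-!
With `R m τ = exp (τ a) - ∑_{k < m} τᵏ aᵏ / k!`, the difference between the quasi-exponential
and the fourth-order operator is, identically in `τ`,
`R 5 τ + τ²/12 (b R 3 τ - R 3 τ b) + τ³/48 (R 2 τ c + c R 2 τ)`,
and `R m τ = O(τᵐ)` is Taylor's formula for the entire function `exp`. Taylor's formula needs a
submultiplicative norm, so for matrices the estimate is made in the `ℓ∞`-operator norm, which
dominates the entrywise sup norm.
-/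

namespace Asymptotics.IsBigO

theorem mul_const {α R F : Type*} [SeminormedRing R] [Norm F] {l : Filter α} {f : α → R}
    {g : α → F} (h : f =O[l] g) (c : R) : (fun x => f x * c) =O[l] g :=
  (isBigO_of_le' (c := ‖c‖) l fun _ => (norm_mul_le _ _).trans_eq (mul_comm _ _)).trans h

theorem pow_div_smul {𝕂 E : Type*} [NormedField 𝕂] [SeminormedAddCommGroup E] [NormedSpace 𝕂 E]
    {l : Filter 𝕂} {f : 𝕂 → E} {k : ℕ} (h : f =O[l] (· ^ k)) (j : ℕ) (d : 𝕂) :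
    (fun τ => (τ ^ j / d) • f τ) =O[l] (· ^ (j + k)) := by
  have hcoef : (fun τ : 𝕂 => τ ^ j / d) =O[l] (· ^ j) :=
    isBigO_of_le' (c := ‖d‖⁻¹) l fun τ => by simp [div_eq_mul_inv, mul_comm]
  simpa [pow_add] using hcoef.smul h

end Asymptotics.IsBigO

section QuasiExponential

variable {𝕂 𝔸 : Type*} [Field 𝕂] [Ring 𝔸] [Algebra 𝕂 𝔸]

noncomputable def quasiExp [TopologicalSpace 𝔸] [IsTopologicalRing 𝔸] (a b c : 𝔸) (τ : 𝕂) : 𝔸 :=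
  exp (τ • a) + (τ ^ 2 / 12) • (b * exp (τ • a) - exp (τ • a) * b)
    + (τ ^ 3 / 48) • (exp (τ • a) * c + c * exp (τ • a))

def fourthOrderOperator (a b c : 𝔸) (τ : 𝕂) : 𝔸 :=
  1 + τ • a + (τ ^ 2 / 2) • a ^ 2
    + τ ^ 3 • ((6 : 𝕂)⁻¹ • a ^ 3 + (24 : 𝕂)⁻¹ • c + (12 : 𝕂)⁻¹ • (b * a - a * b))
    + τ ^ 4 • ((24 : 𝕂)⁻¹ • a ^ 4 + (48 : 𝕂)⁻¹ • (a * c + c * a)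
      + (24 : 𝕂)⁻¹ • (b * a ^ 2 - a ^ 2 * b))

end QuasiExponential

section Normed

variable {𝕂 𝔸 : Type*} [RCLike 𝕂] [NormedRing 𝔸] [NormedAlgebra 𝕂 𝔸]

noncomputable def expRemainder (a : 𝔸) (m : ℕ) (τ : 𝕂) : 𝔸 :=
  exp (τ • a) - (expSeries 𝕂 𝔸).partialSum m (τ • a)

theorem isBigO_expRemainder [CompleteSpace 𝔸] (a : 𝔸) (m : ℕ) :
    (fun τ : 𝕂 => expRemainder a m τ) =O[𝓝 0] (· ^ m) := by
  have hseries := (exp_hasFPowerSeriesAt_zero (𝕂 := 𝕂) (𝔸 := 𝔸)).isBigO_sub_partialSum_pow m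
  have hsmul : Tendsto (fun τ : 𝕂 => τ • a) (𝓝 0) (𝓝 0) := by
    simpa using (tendsto_id (x := 𝓝 (0 : 𝕂))).smul_const a
  have hnorm : (fun τ : 𝕂 => ‖τ • a‖ ^ m) =O[𝓝 0] (· ^ m) :=
    isBigO_of_le' (c := ‖a‖ ^ m) _ fun τ => by simp [norm_smul, mul_pow, mul_comm]
  simpa [Function.comp_def, expRemainder] using (hseries.comp_tendsto hsmul).trans hnorm

theorem quasiExp_sub_fourthOrderOperator (a b c : 𝔸) (τ : 𝕂) :
    quasiExp a b c τ - fourthOrderOperator a b c τ =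
      expRemainder a 5 τ + (τ ^ 2 / 12) • (b * expRemainder a 3 τ - expRemainder a 3 τ * b)
        + (τ ^ 3 / 48) • (expRemainder a 2 τ * c + c * expRemainder a 2 τ) := by
  simp only [quasiExp, fourthOrderOperator, expRemainder, FormalMultilinearSeries.partialSum,
    expSeries_apply_eq, sum_range_succ, sum_range_zero, smul_pow, Nat.factorial, mul_sub, sub_mul,
    mul_add, add_mul, smul_sub, smul_add, mul_smul_comm, smul_mul_assoc, smul_smul, pow_zero,
    pow_one, mul_one, one_mul]
  norm_num
  module

theorem isBigO_quasiExp_sub_fourthOrderOperator [CompleteSpace 𝔸] (a b c : 𝔸) :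
    (fun τ : 𝕂 => quasiExp a b c τ - fourthOrderOperator a b c τ) =O[𝓝 0] (· ^ 5) := by
  have hr (m : ℕ) := isBigO_expRemainder (𝕂 := 𝕂) a m
  have hcomm := ((hr 3).const_mul_left b).sub ((hr 3).mul_const b)
  have hanti := ((hr 2).mul_const c).add ((hr 2).const_mul_left c)
  simp_rw [quasiExp_sub_fourthOrderOperator]
  exact ((hr 5).add (hcomm.pow_div_smul 2 12)).add (hanti.pow_div_smul 3 48)

end Normed

theorem Matrix.norm_le_linfty_opNorm {m n α : Type*} [Fintype m] [Fintype n]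
    [NormedAddCommGroup α] (A : Matrix m n α) :
    ‖A‖ ≤ @Norm.norm _ Matrix.linftyOpNormedAddCommGroup.toNorm A := by
  rw [Matrix.linfty_opNorm_def]
  refine (Matrix.norm_le_iff NNReal.zero_le_coe).2 fun i j => ?_
  rw [← coe_nnnorm, NNReal.coe_le_coe]
  exact (single_le_sum (fun k _ => zero_le) (mem_univ j)).trans
    (le_sup (f := fun i => ∑ k, ‖A i k‖₊) (mem_univ i))

theorem Matrix.isBigO_of_isBigO_linftyOp {m n α E F : Type*} [Fintype m] [Fintype n]
    [NormedAddCommGroup E] [Norm F] {l : Filter α} {f : α → Matrix m n E} {g : α → F}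
    (h : @IsBigO α (Matrix m n E) F Matrix.linftyOpNormedAddCommGroup.toNorm _ l f g) :
    f =O[l] g := by
  obtain ⟨c, hc⟩ := @IsBigO.bound _ _ _ Matrix.linftyOpNormedAddCommGroup.toNorm _ _ _ _ h
  exact IsBigO.of_bound c (hc.mono fun x hx => (norm_le_linfty_opNorm (f x)).trans hx)

/-- the quasi-exponential expression agrees with the symmetric fourth-order
transition operator through order `τ⁴`. -/
theorem quasi_exponential_expansion
    {n : ℕ} (A B C : Matrix (Fin n) (Fin n) ℂ) :
    (fun τ : ℝ =>
        (NormedSpace.exp (τ • A)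
          + (τ ^ 2 / 12 : ℝ) • (B * NormedSpace.exp (τ • A) - NormedSpace.exp (τ • A) * B)
          + (τ ^ 3 / 48 : ℝ) • (NormedSpace.exp (τ • A) * C + C * NormedSpace.exp (τ • A))) -
          (1 + τ • A + (τ ^ 2 / 2 : ℝ) • A ^ 2
            + τ ^ 3 • ((6 : ℝ)⁻¹ • A ^ 3 + (24 : ℝ)⁻¹ • C + (12 : ℝ)⁻¹ • (B * A - A * B))
            + τ ^ 4 • ((24 : ℝ)⁻¹ • A ^ 4 + (48 : ℝ)⁻¹ • (A * C + C * A)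
              + (24 : ℝ)⁻¹ • (B * A ^ 2 - A ^ 2 * B))))
      =O[𝓝 0] fun τ => τ ^ 5 := by
  let : NormedRing (Matrix (Fin n) (Fin n) ℂ) := Matrix.linftyOpNormedRing
  let : NormedAlgebra ℝ (Matrix (Fin n) (Fin n) ℂ) := Matrix.linftyOpNormedAlgebra
  -- completeness is supplied by hand: instance search would find it for the product uniformity,
  -- which agrees with the operator-norm one only up to unfolding
  exact Matrix.isBigO_of_isBigO_linftyOp
    (@isBigO_quasiExp_sub_fourthOrderOperator _ _ _ _ _ (FiniteDimensional.complete ℝ _) A B C)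
end

section
/- Let Q : ℝ → Mₙ(ℂ) be four times continuously differentiable (entrywise). Then the second Magnus term admits the midpoint expansion (1/2)·∫₀ᵗ ∫₀^{t₁} (Q(t₁)·Q(t₂) − Q(t₂)·Q(t₁)) dt₂ dt₁ = (t³/12)·(Q'(t/2)·Q(t/2) − Q(t/2)·Q'(t/2)) + O(t⁵) as t → 0, where the iterated integral is taken entrywise. -/
open Matrix Filter Asymptotics intervalIntegral
open scoped Topology

attribute [local instance] Matrix.normedAddCommGroup Matrix.normedSpace

/-! Replace the commutator by any alternating continuous bilinear map `ω`. With `J t = ∫₀ᵗ Q`,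
the inner integral is `ω (Q t₁) (J t₁)`, so the double integral `Φ` satisfies `Φ' = ω (Q, J)`.
Since `ω` is alternating and `J 0 = 0`, the derivatives of `Φ` at `0` are
`0, 0, 0, ω (Q' 0, Q 0), 2 ω (Q'' 0, Q 0)`, and Taylor's theorem gives
`Φ t = t³/6 ω (Q' 0, Q 0) + t⁴/12 ω (Q'' 0, Q 0) + O(t⁵)`. On the other side
`ω (Q' (t/2), Q (t/2)) = ω (Q' 0, Q 0) + t/2 ω (Q'' 0, Q 0) + O(t²)`, because the contribution
`ω (Q', Q')` vanishes; multiplied by `t³/12` this matches half of `Φ` up to `O(t⁵)`. -/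

section Calculus

variable {E : Type*} [NormedAddCommGroup E] [NormedSpace ℝ E]

open scoped Nat in
theorem ContDiff.isBigO_sub_taylor {f : ℝ → E} {n : ℕ} (hf : ContDiff ℝ n f) (x₀ : ℝ) :
    (fun x => f x - ∑ k ∈ Finset.range n, ((k ! : ℝ)⁻¹ * (x - x₀) ^ k) • iteratedDeriv k f x₀)
      =O[𝓝 x₀] fun x => (x - x₀) ^ n := by
  have hlast : (fun x => ((n ! : ℝ)⁻¹ * (x - x₀) ^ n) • iteratedDeriv n f x₀)
      =O[𝓝 x₀] fun x => (x - x₀) ^ n :=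
    (((isBigO_refl _ _).const_mul_left _).smul (isBigO_const_one ℝ _ _)).congr_right
      fun x => by simp
  refine ((taylor_isLittleO_univ hf).isBigO.add hlast).congr_left fun x => ?_
  simp only [taylor_within_apply, Finset.sum_range_succ, iteratedDerivWithin_univ]
  abel

theorem ContDiff.hasDerivAt_iteratedDeriv_s8 {f : ℝ → E} {n : WithTop ℕ∞} {k : ℕ}
    (hf : ContDiff ℝ n f) (hk : k < n) (t : ℝ) :
    HasDerivAt (iteratedDeriv k f) (iteratedDeriv (k + 1) f t) t := by
  rw [iteratedDeriv_succ]
  exact (hf.differentiable_iteratedDeriv k hk t).hasDerivAt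

theorem ContDiff.primitive [CompleteSpace E] {f : ℝ → E} {n : ℕ} (hf : ContDiff ℝ n f)
    (a : ℝ) : ContDiff ℝ (n + 1) fun t => ∫ s in a..t, f s := by
  have hderiv (t : ℝ) := (hf.continuous.integral_hasStrictDerivAt a t).hasDerivAt
  refine contDiff_succ_iff_deriv.2 ⟨fun t => (hderiv t).differentiableAt, by simp, ?_⟩
  rwa [funext fun t => (hderiv t).deriv]

end Calculus

section Bilinear

variable {E F : Type*} [NormedAddCommGroup E] [NormedSpace ℝ E] [NormedAddCommGroup F]
  [NormedSpace ℝ F] (ω : E →L[ℝ] E →L[ℝ] F) {Q : ℝ → E}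

theorem hasDerivAt_bilinear_primitive [CompleteSpace E] {u : ℝ → E} {u' : E} {t : ℝ}
    (hu : HasDerivAt u u' t) (hQ : Continuous Q) :
    HasDerivAt (fun t => ω (u t) (∫ s in (0 : ℝ)..t, Q s))
      (ω (u t) (Q t) + ω u' (∫ s in (0 : ℝ)..t, Q s)) t :=
  ω.hasDerivAt_of_bilinear (fun _ => hu) fun _ => (hQ.integral_hasStrictDerivAt 0 t).hasDerivAt

theorem isBigO_integral_bilinear_primitive_sub_taylor [CompleteSpace E] [CompleteSpace F]
    (hω : ∀ x, ω x x = 0) (hQ : ContDiff ℝ 4 Q) :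
    (fun t : ℝ => (∫ t₁ in (0 : ℝ)..t, ω (Q t₁) (∫ t₂ in (0 : ℝ)..t₁, Q t₂))
        - (t ^ 3 / 6) • ω (iteratedDeriv 1 Q 0) (Q 0)
        - (t ^ 4 / 12) • ω (iteratedDeriv 2 Q 0) (Q 0))
      =O[𝓝 0] fun t => t ^ 5 := by
  set J : ℝ → E := fun t => ∫ s in (0 : ℝ)..t, Q s
  set h : ℝ → F := fun t => ω (Q t) (J t)
  have hD (k : ℕ) (hk : k < 4) := hQ.hasDerivAt_iteratedDeriv_s8 (k := k) (by exact_mod_cast hk)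
  have hD₀ (t : ℝ) : HasDerivAt Q (iteratedDeriv 1 Q t) t := by simpa using hD 0 (by norm_num) t
  have hd (k : ℕ) (hk : k < 4) (t : ℝ) :=
    hasDerivAt_bilinear_primitive ω (hD k hk t) hQ.continuous
  have h₁ : deriv h = fun t => ω (iteratedDeriv 1 Q t) (J t) := by
    funext t
    simpa [hω] using (hasDerivAt_bilinear_primitive ω (hD₀ t) hQ.continuous).deriv
  have h₂ : deriv (deriv h) = fun t =>
      ω (iteratedDeriv 1 Q t) (Q t) + ω (iteratedDeriv 2 Q t) (J t) := by
    funext t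
    rw [h₁]
    exact (hd 1 (by norm_num) t).deriv
  have h₃ : HasDerivAt (deriv (deriv h)) ((2 : ℝ) • ω (iteratedDeriv 2 Q 0) (Q 0)) 0 := by
    rw [h₂]
    refine ((ω.hasDerivAt_of_bilinear (fun _ => hD 1 (by norm_num) 0) fun _ => hD₀ 0).add
      (hd 2 (by norm_num) 0)).congr_deriv ?_
    simp [hω, two_smul]
  have hJ : ContDiff ℝ (4 + 1) J := hQ.primitive 0
  have hh : ContDiff ℝ 4 h :=
    ω.isBoundedBilinearMap.contDiff.comp (hQ.prodMk (hJ.of_le (by norm_num)))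
  have hΦ : deriv (fun t => ∫ s in (0 : ℝ)..t, h s) = h :=
    funext fun t => (hh.continuous.integral_hasStrictDerivAt 0 t).hasDerivAt.deriv
  have hΦ' : ContDiff ℝ (5 : ℕ) fun t => ∫ s in (0 : ℝ)..t, h s := hh.primitive (n := 4) 0
  refine (hΦ'.isBigO_sub_taylor 0).congr (fun t => ?_) fun t => by simp
  have v₀ : h 0 = 0 := by simp [h, J]
  have v₁ : deriv h 0 = 0 := by simp [h₁, J]
  have v₂ : deriv (deriv h) 0 = ω (iteratedDeriv 1 Q 0) (Q 0) := by simp [h₂, J]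
  simp [Finset.sum_range_succ, iteratedDeriv_succ', hΦ, v₀, v₁, v₂, h₃.deriv, Nat.factorial]
  module

theorem isBigO_bilinear_midpoint_sub_taylor (hω : ∀ x, ω x x = 0) (hQ : ContDiff ℝ 3 Q) :
    (fun t : ℝ => ω (iteratedDeriv 1 Q (t / 2)) (Q (t / 2)) - ω (iteratedDeriv 1 Q 0) (Q 0)
        - (t / 2) • ω (iteratedDeriv 2 Q 0) (Q 0))
      =O[𝓝 0] fun t => t ^ 2 := by
  set g := fun t : ℝ => ω (iteratedDeriv 1 Q (t / 2)) (Q (t / 2))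
  have hhalf : HasDerivAt (fun t : ℝ => t / 2) (1 / 2) 0 := (hasDerivAt_id 0).div_const 2
  have hD (k : ℕ) (hk : k < 3) : HasDerivAt (fun t => iteratedDeriv k Q (t / 2))
      ((1 / 2 : ℝ) • iteratedDeriv (k + 1) Q 0) 0 := by
    simpa [Function.comp_def] using
      (hQ.hasDerivAt_iteratedDeriv_s8 (k := k) (by exact_mod_cast hk) _).scomp 0 hhalf
  have hg : HasDerivAt g ((1 / 2 : ℝ) • ω (iteratedDeriv 2 Q 0) (Q 0)) 0 := by
    refine (ω.hasDerivAt_of_bilinear (fun _ => hD 1 (by norm_num))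
      fun _ => by simpa using hD 0 (by norm_num)).congr_deriv ?_
    simp [hω]
  have hg' : ContDiff ℝ (2 : ℕ) g := by
    have hQ' : ContDiff ℝ 2 (iteratedDeriv 1 Q) := by
      rw [iteratedDeriv_one]
      exact hQ.deriv' (n := 2)
    exact ω.isBoundedBilinearMap.contDiff.comp ((hQ'.comp (contDiff_id.div_const 2)).prodMk
      ((hQ.of_le (by norm_num)).comp (contDiff_id.div_const 2)))
  refine (hg'.isBigO_sub_taylor 0).congr (fun t => ?_) fun t => by simp
  simp only [Finset.sum_range_succ, Finset.sum_range_zero, iteratedDeriv_zero, iteratedDeriv_one,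
    hg.deriv]
  simp [g]
  module

theorem magnus_second_term_midpoint_of_alternating [CompleteSpace E] [CompleteSpace F]
    (hω : ∀ x, ω x x = 0) (hQ : ContDiff ℝ 4 Q) :
    (fun t : ℝ => (2 : ℝ)⁻¹ • (∫ t₁ in (0 : ℝ)..t, ∫ t₂ in (0 : ℝ)..t₁, ω (Q t₁) (Q t₂))
        - (t ^ 3 / 12 : ℝ) • ω (iteratedDeriv 1 Q (t / 2)) (Q (t / 2)))
      =O[𝓝 0] fun t => t ^ 5 := by
  have hinner (t₁ : ℝ) : ∫ t₂ in (0 : ℝ)..t₁, ω (Q t₁) (Q t₂)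
      = ω (Q t₁) (∫ t₂ in (0 : ℝ)..t₁, Q t₂) :=
    (ω (Q t₁)).intervalIntegral_comp_comm (hQ.continuous.intervalIntegrable _ _)
  have hcube : (fun t : ℝ => t ^ 3 / 12) =O[𝓝 0] fun t => t ^ 3 :=
    ((isBigO_refl _ _).const_mul_left (12 : ℝ)⁻¹).congr_left fun t => by ring
  have hmid := (hcube.smul (isBigO_bilinear_midpoint_sub_taylor ω hω (hQ.of_le (by norm_num))))
    |>.congr_right fun t => by rw [smul_eq_mul, ← pow_add]
  refine (((isBigO_integral_bilinear_primitive_sub_taylor ω hω hQ).const_smul_left (2 : ℝ)⁻¹).sub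
    hmid).congr (fun t => ?_) fun t => rfl
  simp only [hinner, Pi.smul_apply]
  module

end Bilinear

/-- midpoint expansion of the second Magnus term
`(1/2)∫₀ᵗ∫₀^{t₁} [Q(t₁),Q(t₂)] dt₂ dt₁ = (t³/12)·[Q'(t/2), Q(t/2)] + O(t⁵)` as `t → 0`. -/
theorem magnus_second_term_midpoint
    {n : ℕ} (Q : ℝ → Matrix (Fin n) (Fin n) ℂ) (hQ : ContDiff ℝ 4 Q) :
    (fun t : ℝ =>
        (2 : ℝ)⁻¹ • (∫ t₁ in (0 : ℝ)..t, ∫ t₂ in (0 : ℝ)..t₁, (Q t₁ * Q t₂ - Q t₂ * Q t₁)) -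
          (t ^ 3 / 12 : ℝ) •
            (iteratedDeriv 1 Q (t / 2) * Q (t / 2) - Q (t / 2) * iteratedDeriv 1 Q (t / 2)))
      =O[𝓝 0] fun t => t ^ 5 :=
  magnus_second_term_midpoint_of_alternating (LinearMap.toContinuousBilinearMap
    (LinearMap.mul ℝ (Matrix (Fin n) (Fin n) ℂ) - (LinearMap.mul ℝ (Matrix (Fin n) (Fin n) ℂ)).flip))
    (fun _ => sub_self _) hQ
end
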